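/- arXiv:1501.03394 — 2 statements merged into one kernel-verified Lean document; each statement's English description precedes it below -/
import Mathlib

section
/- Define φ_n^{(α,β)}(μ) := Σ_{k=0}^{[n/2]} [(d/dx)^{2k} P_n^{(α,β)}(x)]|_{x=1} · μ^k. Then (n+α+β)·φ_n^{(α,β)}(μ) = (n+β)·φ_n^{(α,β−1)}(μ) + (n+α)·φ_n^{(α−1,β)}(μ), and φ_{n−1}^{(α,β)}(μ) = φ_n^{(α,β−1)}(μ) − φ_n^{(α−1,β)}(μ). -/
open Polynomial

/-- The Jacobi polynomial `P_n^{(α,β)}` as a real polynomial in `x`. -/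
noncomputable def jacobiP (α β : ℝ) (n : ℕ) : Polynomial ℝ :=
  C ((ascPochhammer ℝ n).eval (α + 1) / (n.factorial : ℝ)) *
    ∑ k ∈ Finset.range (n + 1),
      C ((ascPochhammer ℝ k).eval (-(n : ℝ)) * (ascPochhammer ℝ k).eval ((n : ℝ) + α + β + 1) /
          ((k.factorial : ℝ) * (ascPochhammer ℝ k).eval (α + 1))) *
        (C (1 / 2 : ℝ) * (1 - X)) ^ k

/-- `φ_n^{(α,β)}(μ) = Σ_{k=0}^{[n/2]} (d/dx)^{2k} P_n^{(α,β)}(x)|_{x=1} · μ^k`. -/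
noncomputable def phi (α β : ℝ) (n : ℕ) : Polynomial ℝ :=
  ∑ k ∈ Finset.range (n / 2 + 1),
    C ((Polynomial.derivative^[2 * k] (jacobiP α β n)).eval 1) * X ^ k

/-- All complex zeros of `p` are real (i.e. `p` splits over `ℝ`). -/
def RealRooted (p : Polynomial ℝ) : Prop := (p.roots.card : ℕ) = p.natDegree

/-- All zeros of `p` are real and simple. -/
def AllRealSimple (p : Polynomial ℝ) : Prop := RealRooted p ∧ p.roots.Nodup

/-- Zeros of `g` and `h` interlace strictly. -/
def StrictlyInterlacing (g h : Polynomial ℝ) : Prop :=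
  AllRealSimple g ∧ AllRealSimple h ∧
  (∀ x : ℝ, ¬(g.IsRoot x ∧ h.IsRoot x)) ∧
  (∀ x y : ℝ, g.IsRoot x → g.IsRoot y → x < y →
      (∀ t : ℝ, g.IsRoot t → ¬(x < t ∧ t < y)) →
      ∃! z : ℝ, h.IsRoot z ∧ x < z ∧ z < y) ∧
  (∀ x y : ℝ, h.IsRoot x → h.IsRoot y → x < y →
      (∀ t : ℝ, h.IsRoot t → ¬(x < t ∧ t < y)) →
      ∃! z : ℝ, g.IsRoot z ∧ x < z ∧ z < y)

/-- `(g,h)` is a real pair: every real combination has only real zeros.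
This is equivalent to non-strict interlacing of the zeros. -/
def RealPair (g h : Polynomial ℝ) : Prop :=
  ∀ a b : ℝ, RealRooted (C a * g + C b * h)

/-- The zero of `p` closest to the origin, when all zeros of `p` are negative. -/
noncomputable def maxRoot (p : Polynomial ℝ) : ℝ := sSup {x : ℝ | p.IsRoot x}

/-- `f` is Hurwitz stable: all complex zeros lie in the open left half-plane. -/
def HurwitzStable (f : Polynomial ℝ) : Prop :=
  ∀ z : ℂ, Polynomial.aeval z f = 0 → z.re < 0

/-!
Both relations already hold one level up, for the Jacobi polynomials themselves:
`(n+α+β) P_n^{(α,β)} = (n+β) P_n^{(α,β-1)} + (n+α) P_n^{(α-1,β)}` and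
`P_{n-1}^{(α,β)} = P_n^{(α,β-1)} - P_n^{(α-1,β)}`. Comparing coefficients of `((1-x)/2)^k`, each
reduces to the rising-factorial identity `x (x+1)_k = (x)_k (x+k)`. Since `φ_n` is the image of `P_n`
under the linear map `p ↦ Σ_{k ≤ [n/2]} p^{(2k)}(1) μ^k`, the relations transfer to `φ`; in the
second one the shorter truncation of `φ_{n-1}` is harmless because `deg P_{n-1} ≤ n-1`.
-/

open Finset Nat

section Pochhammer

variable {S : Type*} [CommSemiring S]

theorem ascPochhammer_eval_add (x : S) (m j : ℕ) :
    (ascPochhammer S (m + j)).eval x =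
      (ascPochhammer S m).eval x * (ascPochhammer S j).eval (x + m) := by
  rw [← ascPochhammer_mul, eval_mul, eval_comp, eval_add, eval_X, eval_natCast]

theorem mul_ascPochhammer_eval_add_one (x : S) (k : ℕ) :
    x * (ascPochhammer S k).eval (x + 1) = (ascPochhammer S k).eval x * (x + k) := by
  rw [← ascPochhammer_succ_eval, add_comm k, ascPochhammer_eval_add, ascPochhammer_one, eval_X,
    Nat.cast_one]

theorem ascPochhammer_succ_eval_add_one_sub {R : Type*} [CommRing R] (x : R) (i : ℕ) :
    (ascPochhammer R (i + 1)).eval (x + 1) - (ascPochhammer R (i + 1)).eval x =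
      (i + 1) * (ascPochhammer R i).eval (x + 1) := by
  rw [ascPochhammer_succ_eval, add_comm i 1, ascPochhammer_eval_add, ascPochhammer_one, eval_X,
    Nat.cast_one]
  ring

end Pochhammer

noncomputable def jacobiCoeff (α β : ℝ) (n k : ℕ) : ℝ :=
  (ascPochhammer ℝ n).eval (α + 1) / (n ! : ℝ) *
    ((ascPochhammer ℝ k).eval (-(n : ℝ)) * (ascPochhammer ℝ k).eval ((n : ℝ) + α + β + 1) /
      ((k ! : ℝ) * (ascPochhammer ℝ k).eval (α + 1)))

theorem jacobiP_eq_sum (α β : ℝ) (n : ℕ) :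
    jacobiP α β n =
      ∑ k ∈ range (n + 1), C (jacobiCoeff α β n k) * (C (1 / 2 : ℝ) * (1 - X)) ^ k := by
  simp only [jacobiP, jacobiCoeff, mul_sum, ← mul_assoc, ← C_mul]

theorem natDegree_jacobiP_le (α β : ℝ) (n : ℕ) : (jacobiP α β n).natDegree ≤ n := by
  rw [jacobiP_eq_sum]
  refine natDegree_sum_le_of_forall_le _ _ fun k hk => ?_
  have hlin : (C (1 / 2 : ℝ) * (1 - X)).natDegree ≤ 1 := by compute_degree
  calc _ ≤ ((C (1 / 2 : ℝ) * (1 - X)) ^ k).natDegree := natDegree_C_mul_le _ _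
    _ ≤ k * 1 := natDegree_pow_le_of_le k hlin
    _ ≤ n := by rw [mem_range] at hk; omega

theorem jacobiCoeff_add_left (α β : ℝ) (k j : ℕ) (hα : (ascPochhammer ℝ k).eval (α + 1) ≠ 0) :
    jacobiCoeff α β (k + j) k =
      (ascPochhammer ℝ j).eval (α + k + 1) * (ascPochhammer ℝ k).eval (-((k + j : ℕ) : ℝ)) *
        (ascPochhammer ℝ k).eval (((k + j : ℕ) : ℝ) + α + β + 1) / ((k + j)! * k !) := by
  rw [jacobiCoeff, ascPochhammer_eval_add, add_right_comm α]
  field_simp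

theorem jacobiCoeff_contiguous_add (α β : ℝ) {n k : ℕ} (hk : k ≤ n)
    (hα : (ascPochhammer ℝ k).eval (α + 1) ≠ 0) (hα' : (ascPochhammer ℝ k).eval α ≠ 0) :
    ((n : ℝ) + α + β) * jacobiCoeff α β n k =
      ((n : ℝ) + β) * jacobiCoeff α (β - 1) n k + ((n : ℝ) + α) * jacobiCoeff (α - 1) β n k := by
  obtain ⟨j, rfl⟩ := Nat.exists_eq_add_of_le hk
  rw [← sub_add_cancel α 1] at hα'
  set N : ℝ := ((k + j : ℕ) : ℝ) with hN
  rw [jacobiCoeff_add_left _ _ _ _ hα, jacobiCoeff_add_left _ _ _ _ hα,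
    jacobiCoeff_add_left _ _ _ _ hα', show α - 1 + k + 1 = α + k by ring,
    show N + α + (β - 1) + 1 = N + α + β by ring, show N + (α - 1) + β + 1 = N + α + β by ring]
  have hβ := mul_ascPochhammer_eval_add_one (N + α + β) k
  have hα := mul_ascPochhammer_eval_add_one (α + k) j
  rw [show α + k + j = N + α by rw [hN, Nat.cast_add]; ring] at hα
  linear_combination
    ((ascPochhammer ℝ j).eval (α + k + 1) * (ascPochhammer ℝ k).eval (-N) / ((k + j)! * k !)) * hβ
    + ((ascPochhammer ℝ k).eval (-N) * (ascPochhammer ℝ k).eval (N + α + β) / ((k + j)! * k !)) * hα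

theorem jacobiCoeff_eq_zero_of_lt (α β : ℝ) {n k : ℕ} (h : n < k) : jacobiCoeff α β n k = 0 := by
  simp [jacobiCoeff, ascPochhammer_eval_neg_coe_nat_of_lt h]

theorem jacobiCoeff_contiguous_sub (α β : ℝ) {n k : ℕ} (hk : k ≤ n + 1)
    (hα : (ascPochhammer ℝ k).eval (α + 1) ≠ 0) (hα' : (ascPochhammer ℝ k).eval α ≠ 0) :
    jacobiCoeff α β n k = jacobiCoeff α (β - 1) (n + 1) k - jacobiCoeff (α - 1) β (n + 1) k := by
  rw [← sub_add_cancel α 1] at hα'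
  rcases hk.lt_or_eq with hk | rfl
  · obtain ⟨i, rfl⟩ := Nat.exists_eq_add_of_le (Nat.le_of_lt_succ hk)
    rw [show k + i + 1 = k + (i + 1) by ring, jacobiCoeff_add_left _ _ _ _ hα,
      jacobiCoeff_add_left _ _ _ _ hα, jacobiCoeff_add_left _ _ _ _ hα',
      show α - 1 + k + 1 = α + k by ring, ← sub_div]
    set N := k + i with hN
    rw [show k + (i + 1) = N + 1 by ring, Nat.factorial_succ, Nat.cast_mul, Nat.cast_succ,
      show (N : ℝ) + 1 + α + (β - 1) + 1 = N + α + β + 1 by ring,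
      show (N : ℝ) + 1 + (α - 1) + β + 1 = N + α + β + 1 by ring, ← sub_mul, ← sub_mul,
      ascPochhammer_succ_eval_add_one_sub (α + k), div_eq_div_iff (by positivity) (by positivity)]
    have hA := mul_ascPochhammer_eval_add_one (-((N : ℝ) + 1)) k
    rw [show -((N : ℝ) + 1) + 1 = -N by ring,
      show -((N : ℝ) + 1) + k = -(i + 1) by rw [hN, Nat.cast_add]; ring] at hA
    linear_combination (-((ascPochhammer ℝ i).eval (α + k + 1) *
      (ascPochhammer ℝ k).eval (N + α + β + 1) * N ! * k !)) * hA
  · have hself := fun b ↦ jacobiCoeff_add_left α b (n + 1) 0 hα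
    have hself' := jacobiCoeff_add_left (α - 1) β (n + 1) 0 hα'
    simp only [add_zero, ascPochhammer_zero, eval_one, one_mul] at hself hself'
    rw [jacobiCoeff_eq_zero_of_lt _ _ (Nat.lt_succ_self n), hself, hself']
    ring_nf

theorem jacobiP_contiguous_add (α β : ℝ) (n : ℕ)
    (hα : ∀ k ≤ n, (ascPochhammer ℝ k).eval (α + 1) ≠ 0)
    (hα' : ∀ k ≤ n, (ascPochhammer ℝ k).eval α ≠ 0) :
    C ((n : ℝ) + α + β) * jacobiP α β n =
      C ((n : ℝ) + β) * jacobiP α (β - 1) n + C ((n : ℝ) + α) * jacobiP (α - 1) β n := by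
  simp only [jacobiP_eq_sum, mul_sum, ← sum_add_distrib, ← mul_assoc, ← C_mul, ← add_mul, ← C_add]
  refine sum_congr rfl fun k hk => ?_
  have hkn : k ≤ n := Nat.le_of_lt_succ (mem_range.mp hk)
  rw [jacobiCoeff_contiguous_add α β hkn (hα k hkn) (hα' k hkn)]

theorem jacobiP_contiguous_sub (α β : ℝ) (n : ℕ)
    (hα : ∀ k ≤ n + 1, (ascPochhammer ℝ k).eval (α + 1) ≠ 0)
    (hα' : ∀ k ≤ n + 1, (ascPochhammer ℝ k).eval α ≠ 0) :
    jacobiP α β n = jacobiP α (β - 1) (n + 1) - jacobiP (α - 1) β (n + 1) := by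
  calc jacobiP α β n
      = ∑ k ∈ range (n + 2), C (jacobiCoeff α β n k) * (C (1 / 2 : ℝ) * (1 - X)) ^ k := by
        rw [sum_range_succ, jacobiCoeff_eq_zero_of_lt _ _ (lt_add_one n), C_0, zero_mul, add_zero,
          jacobiP_eq_sum]
    _ = _ := by
        rw [jacobiP_eq_sum, jacobiP_eq_sum, ← sum_sub_distrib]
        refine sum_congr rfl fun k hk => ?_
        have hkn : k ≤ n + 1 := Nat.le_of_lt_succ (mem_range.mp hk)
        rw [jacobiCoeff_contiguous_sub α β hkn (hα k hkn) (hα' k hkn), C_sub, sub_mul]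

section EvenDerivatives

variable {R : Type*} [CommSemiring R]

noncomputable def evenDerivPoly (a : R) (N : ℕ) : R[X] →ₗ[R] R[X] where
  toFun p := ∑ k ∈ range N, C ((derivative^[2 * k] p).eval a) * X ^ k
  map_add' p q := by
    simp only [iterate_map_add, eval_add, C_add, add_mul, sum_add_distrib]
  map_smul' c p := by
    simp only [smul_eq_C_mul, iterate_derivative_C_mul, eval_mul, eval_C, C_mul, mul_assoc,
      RingHom.id_apply, mul_sum]

theorem evenDerivPoly_eq_of_natDegree_lt (a : R) {p : R[X]} {N M : ℕ} (hp : p.natDegree < 2 * N)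
    (hNM : N ≤ M) : evenDerivPoly a N p = evenDerivPoly a M p := by
  refine sum_subset (range_subset_range.mpr hNM) fun k _ hk => ?_
  rw [iterate_derivative_eq_zero (by rw [mem_range] at hk; omega), eval_zero, C_0, zero_mul]

end EvenDerivatives

theorem phi_eq_evenDerivPoly (α β : ℝ) (n : ℕ) :
    phi α β n = evenDerivPoly 1 (n / 2 + 1) (jacobiP α β n) := rfl

/-- `(n+α+β)·φ_n^{(α,β)} = (n+β)·φ_n^{(α,β−1)} + (n+α)·φ_n^{(α−1,β)}` and
`φ_{n−1}^{(α,β)} = φ_n^{(α,β−1)} − φ_n^{(α−1,β)}`. -/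
theorem phi_sum_and_difference_rels (α β : ℝ) (n : ℕ) (hn : 1 ≤ n)
    (hα : ∀ k ≤ n, (ascPochhammer ℝ k).eval (α + 1) ≠ 0)
    (hα' : ∀ k ≤ n, (ascPochhammer ℝ k).eval α ≠ 0) :
    (C ((n : ℝ) + α + β) * phi α β n =
        C ((n : ℝ) + β) * phi α (β - 1) n + C ((n : ℝ) + α) * phi (α - 1) β n) ∧
    (phi α β (n - 1) = phi α (β - 1) n - phi (α - 1) β n) := by
  refine ⟨?_, ?_⟩
  · simp only [phi_eq_evenDerivPoly, C_mul', ← map_smul, ← map_add]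
    rw [← C_mul', jacobiP_contiguous_add α β n hα hα', C_mul', C_mul']
  · obtain ⟨m, rfl⟩ := Nat.exists_eq_add_of_le' hn
    rw [Nat.add_sub_cancel, phi_eq_evenDerivPoly, phi_eq_evenDerivPoly, phi_eq_evenDerivPoly,
      ← map_sub, ← jacobiP_contiguous_sub α β m hα hα']
    exact evenDerivPoly_eq_of_natDegree_lt 1
      ((natDegree_jacobiP_le α β m).trans_lt (by omega)) (by omega)
end

section
/- With b_k the coefficients of φ_n^{(α,β)}(μ) = Σ_k b_k μ^k, one has b_1²/(b_0 b_2) = n(n−1)(α+3)(α+4)(n+α+β+1)(n+α+β+2) / [(n−2)(n−3)(α+1)(α+2)(n+α+β+3)(n+α+β+4)], and this quantity tends to (α+3)(α+4)/((α+1)(α+2)) as n → ∞. Consequently, for every α > (1+√33)/2 and every β, the polynomial φ_n^{(α,β)} has a non-real zero for all sufficiently large n. -/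
/-!
The coefficient `b_k` of `φ_n^{(α,β)}` is `(2k)!` times the `2k`-th Taylor coefficient of the
Jacobi polynomial at `x = 1`, and the defining hypergeometric sum of `P_n^{(α,β)}` is already
that Taylor expansion in powers of `(1 - x)/2`. This gives `b_k` in closed form, hence the ratio
`b₁²/(b₀b₂)` as an explicit rational function of `n`. Every real-rooted polynomial satisfies
`b₁² ≥ 2 b₀ b₂` (induction on its linear factors), while for `α > (1 + √33)/2` the limit
`(α+3)(α+4)/((α+1)(α+2))` of the ratio is below `2` and `b₀, b₂ > 0` for large `n`.
-/

open Polynomial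

open Filter Topology
open scoped Nat

section Newton

variable {R : Type*} [CommRing R] [LinearOrder R] [IsStrictOrderedRing R]

theorem two_mul_coeff_zero_mul_coeff_two_le_of_prod_X_sub_C (s : Multiset R) :
    2 * ((s.map (X - C ·)).prod.coeff 0 * (s.map (X - C ·)).prod.coeff 2) ≤
      (s.map (X - C ·)).prod.coeff 1 ^ 2 := by
  induction s using Multiset.induction_on with
  | empty => simp [coeff_one]
  | cons a s ih =>
    rw [Multiset.map_cons, Multiset.prod_cons]
    set q := (s.map (X - C ·)).prod
    rw [coeff_X_sub_C_mul, coeff_X_sub_C_mul]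
    simp only [mul_coeff_zero, coeff_sub, coeff_X_zero, coeff_C_zero, zero_sub]
    -- the new gap `c₁'² - 2c₀'c₂'` is `a² (c₁² - 2c₀c₂) + c₀²`, where `cᵢ := q.coeff i`
    nlinarith [sq_nonneg (q.coeff 0), mul_nonneg (sq_nonneg a) (sub_nonneg.2 ih)]

theorem Polynomial.Splits.two_mul_coeff_zero_mul_coeff_two_le {p : R[X]} (hp : p.Splits) :
    2 * (p.coeff 0 * p.coeff 2) ≤ p.coeff 1 ^ 2 := by
  rw [hp.eq_prod_roots]
  simp only [coeff_C_mul]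
  nlinarith [two_mul_coeff_zero_mul_coeff_two_le_of_prod_X_sub_C p.roots,
    sq_nonneg p.leadingCoeff]

end Newton

theorem Polynomial.splits_of_forall_aeval_eq_zero_im_eq_zero {p : ℝ[X]}
    (h : ∀ z : ℂ, aeval z p = 0 → z.im = 0) : p.Splits := by
  refine (IsAlgClosed.splits (p.map (algebraMap ℝ ℂ))).of_splits_map _ fun z hz => ?_
  have hz₀ : aeval z p = 0 := by
    simpa [aeval_def, eval_map] using (mem_roots'.1 hz).2
  exact ⟨z.re, Complex.ext rfl (h z hz₀).symm⟩

theorem Polynomial.eval_iterate_derivative_eq_factorial_mul_coeff_taylor {R : Type*}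
    [CommSemiring R] (f : R[X]) (r : R) (k : ℕ) :
    (derivative^[k] f).eval r = k ! * (taylor r f).coeff k := by
  rw [taylor_coeff, ← factorial_smul_hasseDeriv, LinearMap.smul_apply, eval_smul, nsmul_eq_mul]

theorem coeff_taylor_one_jacobiP (α β : ℝ) {n m : ℕ} (hm : m ≤ n) :
    (taylor 1 (jacobiP α β n)).coeff m =
      (ascPochhammer ℝ n).eval (α + 1) / n ! *
        ((ascPochhammer ℝ m).eval (-(n : ℝ)) *
            (ascPochhammer ℝ m).eval ((n : ℝ) + α + β + 1) /
          (m ! * (ascPochhammer ℝ m).eval (α + 1)) * (-1 / 2) ^ m) := by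
  -- shifting by `1` turns `(1 - x)/2` into `-x/2`, so only the `m`-th summand has an `X ^ m`
  have hT : taylor 1 (C (1 / 2 : ℝ) * (1 - X)) = C (-1 / 2) * X := by
    rw [taylor_mul, taylor_C, map_sub, taylor_one, taylor_X, C_1, sub_add_cancel_right, neg_div,
      C_neg]
    ring
  rw [jacobiP, taylor_mul, taylor_C, coeff_C_mul, map_sum, finsetSum_coeff,
    Finset.sum_eq_single m]
  · rw [taylor_mul, taylor_C, coeff_C_mul, taylor_pow, hT, mul_pow, ← C_pow, coeff_C_mul_X_pow,
      if_pos rfl]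
  · intro k _ hk
    rw [taylor_mul, taylor_C, coeff_C_mul, taylor_pow, hT, mul_pow, ← C_pow, coeff_C_mul_X_pow,
      if_neg (Ne.symm hk), mul_zero]
  · intro h
    exact absurd (Finset.mem_range.2 (Nat.lt_succ_of_le hm)) h

noncomputable def phiCoeff (α β : ℝ) (n k : ℕ) : ℝ :=
  (ascPochhammer ℝ n).eval (α + 1) / n ! *
    ((ascPochhammer ℝ (2 * k)).eval (-(n : ℝ)) *
        (ascPochhammer ℝ (2 * k)).eval ((n : ℝ) + α + β + 1) /
      ((ascPochhammer ℝ (2 * k)).eval (α + 1) * 4 ^ k))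

theorem coeff_phi {α β : ℝ} {n k : ℕ} (hk : 2 * k ≤ n) :
    (phi α β n).coeff k = phiCoeff α β n k := by
  have hsum : (phi α β n).coeff k = (derivative^[2 * k] (jacobiP α β n)).eval 1 := by
    rw [phi, finsetSum_coeff, Finset.sum_eq_single k]
    · rw [coeff_C_mul_X_pow, if_pos rfl]
    · intro j _ hj
      rw [coeff_C_mul_X_pow, if_neg (Ne.symm hj)]
    · intro h
      exact absurd (Finset.mem_range.2 (by omega)) h
  rw [hsum, eval_iterate_derivative_eq_factorial_mul_coeff_taylor,
    coeff_taylor_one_jacobiP α β hk, phiCoeff, pow_mul, show (-1 / 2 : ℝ) ^ 2 = 4⁻¹ by norm_num,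
    inv_pow]
  have : ((2 * k) ! : ℝ) ≠ 0 := by positivity
  field_simp

theorem phiCoeff_pos {α β : ℝ} {n k : ℕ} (hα : -1 < α) (hk : 2 * k ≤ n)
    (hs : 0 < (n : ℝ) + α + β + 1) : 0 < phiCoeff α β n k := by
  have hneg : 0 < (ascPochhammer ℝ (2 * k)).eval (-(n : ℝ)) := by
    rw [ascPochhammer_eval_neg_eq_descPochhammer, descPochhammer_eval_eq_descFactorial, pow_mul,
      neg_one_sq, one_pow, one_mul, Nat.cast_pos]
    exact Nat.descFactorial_pos.2 hk
  have ha : 0 < α + 1 := by linarith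
  have := ascPochhammer_pos n _ ha
  have := ascPochhammer_pos (2 * k) _ ha
  have := ascPochhammer_pos (2 * k) _ hs
  unfold phiCoeff
  positivity

theorem phiCoeff_zero (α β : ℝ) (n : ℕ) :
    phiCoeff α β n 0 = (ascPochhammer ℝ n).eval (α + 1) / n ! := by
  simp [phiCoeff]

theorem phiCoeff_one (α β : ℝ) (n : ℕ) :
    phiCoeff α β n 1 = phiCoeff α β n 0 *
      ((n : ℝ) * (n - 1) * ((n + α + β + 1) * (n + α + β + 2)) /
        ((α + 1) * (α + 2) * 4)) := by
  simp only [phiCoeff, ascPochhammer_succ_eval, ascPochhammer_zero, eval_one, Nat.reduceMul]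
  ring

theorem phiCoeff_two (α β : ℝ) (n : ℕ) :
    phiCoeff α β n 2 = phiCoeff α β n 0 *
      ((n : ℝ) * (n - 1) * ((n - 2) * (n - 3)) *
          ((n + α + β + 1) * (n + α + β + 2) * ((n + α + β + 3) * (n + α + β + 4))) /
        ((α + 1) * (α + 2) * ((α + 3) * (α + 4)) * 16)) := by
  simp only [phiCoeff, ascPochhammer_succ_eval, ascPochhammer_zero, eval_one, Nat.reduceMul,
    Nat.cast_ofNat]
  ring

theorem coeff_phi_one_sq_div {α β : ℝ} {n : ℕ} (hα : -1 < α) (hn : 4 ≤ n) :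
    ((phi α β n).coeff 1) ^ 2 / ((phi α β n).coeff 0 * (phi α β n).coeff 2) =
      ((n : ℝ) * ((n : ℝ) - 1) * (α + 3) * (α + 4) *
          ((n : ℝ) + α + β + 1) * ((n : ℝ) + α + β + 2)) /
        (((n : ℝ) - 2) * ((n : ℝ) - 3) * (α + 1) * (α + 2) *
          ((n : ℝ) + α + β + 3) * ((n : ℝ) + α + β + 4)) := by
  have hb₀ : phiCoeff α β n 0 ≠ 0 := by
    rw [phiCoeff_zero]
    exact (div_pos (ascPochhammer_pos n _ (by linarith)) (by positivity)).ne'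
  rw [coeff_phi (by omega), coeff_phi (by omega), coeff_phi (by omega), phiCoeff_one,
    phiCoeff_two, mul_pow, sq (phiCoeff α β n 0), mul_assoc, mul_div_mul_left _ _ hb₀]
  have hn' : (4 : ℝ) ≤ n := by exact_mod_cast hn
  have : (n : ℝ) ≠ 0 := by linarith
  have : (n : ℝ) - 1 ≠ 0 := by linarith
  have : (n : ℝ) - 2 ≠ 0 := by linarith
  have : (n : ℝ) - 3 ≠ 0 := by linarith
  have : α + 1 ≠ 0 := by linarith
  have : α + 2 ≠ 0 := by linarith
  have : α + 3 ≠ 0 := by linarith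
  have : α + 4 ≠ 0 := by linarith
  obtain h | h₁ := eq_or_ne ((n : ℝ) + α + β + 1) 0
  · simp [h]
  obtain h | h₂ := eq_or_ne ((n : ℝ) + α + β + 2) 0
  · simp [h]
  obtain h | h₃ := eq_or_ne ((n : ℝ) + α + β + 3) 0
  · simp [h]
  obtain h | h₄ := eq_or_ne ((n : ℝ) + α + β + 4) 0
  · simp [h]
  field_simp
  ring

theorem tendsto_natCast_add_div_natCast_add (a b : ℝ) :
    Tendsto (fun n : ℕ => ((n : ℝ) + a) / (n + b)) atTop (𝓝 1) := by
  simpa [add_comm] using tendsto_add_mul_div_add_mul_atTop_nhds a b 1 one_ne_zero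

theorem tendsto_phi_coeff_ratio (α β : ℝ) : Tendsto
    (fun n : ℕ =>
      ((n : ℝ) * ((n : ℝ) - 1) * (α + 3) * (α + 4) *
          ((n : ℝ) + α + β + 1) * ((n : ℝ) + α + β + 2)) /
        (((n : ℝ) - 2) * ((n : ℝ) - 3) * (α + 1) * (α + 2) *
          ((n : ℝ) + α + β + 3) * ((n : ℝ) + α + β + 4)))
    atTop (𝓝 ((α + 3) * (α + 4) / ((α + 1) * (α + 2)))) := by
  have h := tendsto_natCast_add_div_natCast_add
  convert ((((h 0 (-2)).mul (h (-1) (-3))).mul_const ((α + 3) / (α + 1))).mul_const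
    ((α + 4) / (α + 2))).mul (h (α + β + 1) (α + β + 3)) |>.mul
      (h (α + β + 2) (α + β + 4)) using 1
  · ext n
    simp only [mul_div_mul_comm]
    ring_nf
  · rw [mul_div_mul_comm]
    ring_nf

theorem phi_coeff_ratio_limit_lt_two {α : ℝ} (hα : (1 + √33) / 2 < α) :
    (α + 3) * (α + 4) / ((α + 1) * (α + 2)) < 2 := by
  have h33 : √33 ^ 2 = 33 := Real.sq_sqrt (by norm_num)
  have h5 : 5 < √33 := by nlinarith [Real.sqrt_nonneg 33]
  -- `(1 + √33)/2` is the larger zero of `α² - α - 8 = 2(α+1)(α+2) - (α+3)(α+4)`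
  have hquad : 0 < α ^ 2 - α - 8 := by nlinarith
  rw [div_lt_iff₀ (by nlinarith)]
  nlinarith

/-- The ratio `b₁²/(b₀b₂)` for `φ_n^{(α,β)}`, its limit as `n → ∞`, and the consequence
that for `α > (1+√33)/2` the polynomial `φ_n^{(α,β)}` has a non-real zero for all large `n`. -/
theorem phi_coeff_ratio_and_nonreal_zeros :
    (∀ (α β : ℝ) (n : ℕ), -1 < α → 4 ≤ n →
      ((phi α β n).coeff 1) ^ 2 / ((phi α β n).coeff 0 * (phi α β n).coeff 2) =
        ((n : ℝ) * ((n : ℝ) - 1) * (α + 3) * (α + 4) *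
            ((n : ℝ) + α + β + 1) * ((n : ℝ) + α + β + 2)) /
          (((n : ℝ) - 2) * ((n : ℝ) - 3) * (α + 1) * (α + 2) *
            ((n : ℝ) + α + β + 3) * ((n : ℝ) + α + β + 4))) ∧
    (∀ α β : ℝ, Filter.Tendsto
      (fun n : ℕ =>
        ((n : ℝ) * ((n : ℝ) - 1) * (α + 3) * (α + 4) *
            ((n : ℝ) + α + β + 1) * ((n : ℝ) + α + β + 2)) /
          (((n : ℝ) - 2) * ((n : ℝ) - 3) * (α + 1) * (α + 2) *
            ((n : ℝ) + α + β + 3) * ((n : ℝ) + α + β + 4)))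
      Filter.atTop (nhds ((α + 3) * (α + 4) / ((α + 1) * (α + 2))))) ∧
    (∀ α β : ℝ, (1 + Real.sqrt 33) / 2 < α →
      ∃ N : ℕ, ∀ n ≥ N, ∃ z : ℂ, Polynomial.aeval z (phi α β n) = 0 ∧ z.im ≠ 0) := by
  refine ⟨fun α β n hα hn => coeff_phi_one_sq_div hα hn, tendsto_phi_coeff_ratio,
    fun α β hα => ?_⟩
  have hα' : -1 < α := by nlinarith [Real.sqrt_nonneg 33]
  obtain ⟨N, hN⟩ := eventually_atTop.1 <|
    ((tendsto_phi_coeff_ratio α β).eventually_lt_const (phi_coeff_ratio_limit_lt_two hα)).and <|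
      (eventually_ge_atTop 4).and <|
        tendsto_natCast_atTop_atTop.eventually_gt_atTop (-(α + β + 1))
  refine ⟨N, fun n hn => ?_⟩
  obtain ⟨hlt, hn4, hs⟩ := hN n hn
  by_contra! hreal
  have hnewton :=
    (splits_of_forall_aeval_eq_zero_im_eq_zero hreal).two_mul_coeff_zero_mul_coeff_two_le
  have hpos : 0 < (phi α β n).coeff 0 * (phi α β n).coeff 2 := by
    rw [coeff_phi (by omega), coeff_phi (by omega)]
    exact mul_pos (phiCoeff_pos hα' (by omega) (by linarith))
      (phiCoeff_pos hα' (by omega) (by linarith))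
  rw [← coeff_phi_one_sq_div hα' hn4, div_lt_iff₀ hpos] at hlt
  linarith
end
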